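/- If S_n(A) ≠ {0} and ℓ ≤ n, then S_n(A) is contained in the kernel of the ℓ-local open boundary parent Hamiltonian H_n(A,ℓ) = Σ_{i=0}^{n−ℓ} 1^{⊗i} ⊗ h ⊗ 1^{⊗(n−ℓ−i)}, where h is the orthogonal projector onto S_ℓ(A)^⊥; in particular H_n(A,ℓ) is frustration free with the MPS as ground states. -/

import Mathlib

open scoped BigOperators

noncomputable section

def prodA {d D : ℕ} (A : Fin d → Matrix (Fin D) (Fin D) ℂ) {k : ℕ} (s : Fin k → Fin d) :
    Matrix (Fin D) (Fin D) ℂ :=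
  (List.ofFn fun t => A (s t)).prod

/-- The MPS state |X[A]^k⟩ in the Hilbert space H^{⊗k} = EuclideanSpace ℂ (Fin k → Fin d). -/
def mpsVec {d D : ℕ} (A : Fin d → Matrix (Fin D) (Fin D) ℂ) (X : Matrix (Fin D) (Fin D) ℂ)
    (k : ℕ) : EuclideanSpace ℂ (Fin k → Fin d) :=
  WithLp.toLp 2 (fun s => (X * prodA A s).trace)

/-- The physical MPS subspace S_k(A) ⊆ H^{⊗k}. -/
def mpsSpace {d D : ℕ} (A : Fin d → Matrix (Fin D) (Fin D) ℂ) (k : ℕ) :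
    Submodule ℂ (EuclideanSpace ℂ (Fin k → Fin d)) :=
  Submodule.span ℂ (Set.range fun X => mpsVec A X k)

/-- The orthogonal projector h onto S_ℓ(A)^⊥, as a map on H^{⊗ℓ}. -/
def localProj {d D : ℕ} (A : Fin d → Matrix (Fin D) (Fin D) ℂ) (l : ℕ) :
    EuclideanSpace ℂ (Fin l → Fin d) → EuclideanSpace ℂ (Fin l → Fin d) :=
  fun v => ((Submodule.orthogonalProjectionOnto (mpsSpace A l)ᗮ v : (mpsSpace A l)ᗮ) :
    EuclideanSpace ℂ (Fin l → Fin d))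

/-- The operator 1^{⊗i} ⊗ O ⊗ 1^{⊗(n−ℓ−i)} on H^{⊗n}, acting as `O` on the window of `ℓ`
sites starting at site `i`, and as the identity elsewhere. -/
def embedAt {d : ℕ} (n l i : ℕ) (hi : i + l ≤ n)
    (O : EuclideanSpace ℂ (Fin l → Fin d) → EuclideanSpace ℂ (Fin l → Fin d))
    (v : EuclideanSpace ℂ (Fin n → Fin d)) : EuclideanSpace ℂ (Fin n → Fin d) :=
  WithLp.toLp 2 (fun s => ∑ t : Fin l → Fin d,
    O (WithLp.toLp 2 (fun u => if u = t then 1 else 0)) (fun r => s ⟨i + (r : ℕ), by omega⟩) *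
      v (fun j => if h : i ≤ (j : ℕ) ∧ (j : ℕ) < i + l then t ⟨(j : ℕ) - i, by omega⟩ else s j))

/-- The ℓ-local open-boundary parent Hamiltonian H_n(A,ℓ) = ∑_{i=0}^{n−ℓ} 1^{⊗i} ⊗ h ⊗ 1^{⊗(n−ℓ−i)}
with h the orthogonal projector onto S_ℓ(A)^⊥, as an operator on H^{⊗n}. -/
def parentH {d D : ℕ} (A : Fin d → Matrix (Fin D) (Fin D) ℂ) (n l : ℕ) (hl : l ≤ n)
    (v : EuclideanSpace ℂ (Fin n → Fin d)) : EuclideanSpace ℂ (Fin n → Fin d) :=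
  ∑ i ∈ (Finset.range (n - l + 1)).attach,
    embedAt n l (i : ℕ) (by have := Finset.mem_range.mp i.2; omega) (localProj A l) v

/-! Each term of the parent Hamiltonian acts on a window of `ℓ` consecutive sites. Freezing the
configuration outside the window, the coefficients of an MPS `tr(X A_{s₁} ⋯ A_{sₙ})` become
`tr(X L A_{t₁} ⋯ A_{t_ℓ} R)`, where `L` and `R` are the products over the sites left and right of
the window. By cyclicity of the trace this is the length-`ℓ` MPS with boundary matrix `R X L`, so
it lies in `S_ℓ(A)` and the projector `h` onto `S_ℓ(A)^⊥` kills it. -/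

section Window

variable {d n l : ℕ} (i : ℕ)

def insertWindow (s : Fin n → Fin d) (t : Fin l → Fin d) : Fin n → Fin d :=
  fun j => if h : i ≤ (j : ℕ) ∧ (j : ℕ) < i + l then t ⟨(j : ℕ) - i, by omega⟩ else s j

def windowRestrict (hi : i + l ≤ n) (s : Fin n → Fin d) : Fin l → Fin d :=
  fun r => s ⟨i + r, by omega⟩

def windowSlice (s : Fin n → Fin d) :
    EuclideanSpace ℂ (Fin n → Fin d) →ₗ[ℂ] EuclideanSpace ℂ (Fin l → Fin d) where
  toFun v := WithLp.toLp 2 fun t => v (insertWindow i s t)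
  map_add' _ _ := rfl
  map_smul' _ _ := rfl

theorem embedAt_apply (hi : i + l ≤ n)
    (O : EuclideanSpace ℂ (Fin l → Fin d) →ₗ[ℂ] EuclideanSpace ℂ (Fin l → Fin d))
    (v : EuclideanSpace ℂ (Fin n → Fin d)) (s : Fin n → Fin d) :
    embedAt n l i hi O v s = O (windowSlice i s v) (windowRestrict i hi s) := by
  conv_rhs => rw [← (EuclideanSpace.basisFun _ ℂ).sum_repr (windowSlice i s v)]
  simp only [map_sum, map_smul, WithLp.ofLp_sum, Finset.sum_apply, PiLp.smul_apply, smul_eq_mul,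
    EuclideanSpace.basisFun_apply, EuclideanSpace.basisFun_repr]
  refine Finset.sum_congr rfl fun t _ => ?_
  rw [mul_comm]
  have hsingle : EuclideanSpace.single t (1 : ℂ) = WithLp.toLp 2 fun u => if u = t then 1 else 0 :=
    congrArg _ (funext fun u => Pi.single_apply t 1 u)
  rw [hsingle]
  rfl

theorem embedAt_eq_zero_of_forall_windowSlice_mem_ker (hi : i + l ≤ n)
    (O : EuclideanSpace ℂ (Fin l → Fin d) →ₗ[ℂ] EuclideanSpace ℂ (Fin l → Fin d))
    {v : EuclideanSpace ℂ (Fin n → Fin d)} (hv : ∀ s, windowSlice i s v ∈ LinearMap.ker O) :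
    embedAt n l i hi O v = 0 := by
  ext s
  rw [embedAt_apply, LinearMap.mem_ker.mp (hv s)]
  rfl

end Window

section MPS

variable {d D : ℕ} (A : Fin d → Matrix (Fin D) (Fin D) ℂ)

theorem prodA_append {a b : ℕ} (s : Fin (a + b) → Fin d) :
    prodA A s = prodA A (fun r : Fin a => s (Fin.castAdd b r)) *
      prodA A (fun r : Fin b => s (Fin.natAdd a r)) := by
  rw [prodA, List.ofFn_add, List.prod_append]
  rfl

theorem prodA_eq_mul_window {n l m : ℕ} (i : ℕ) (h : i + l + m = n) (s : Fin n → Fin d) :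
    prodA A s = prodA A (fun r : Fin i => s ⟨r, by omega⟩) *
      prodA A (fun r : Fin l => s ⟨i + r, by omega⟩) *
      prodA A (fun r : Fin m => s ⟨i + l + r, by omega⟩) := by
  subst h
  rw [prodA_append, prodA_append]
  rfl

theorem prodA_insertWindow {n l : ℕ} (i : ℕ) (hi : i + l ≤ n) (s : Fin n → Fin d)
    (t : Fin l → Fin d) :
    prodA A (insertWindow i s t) = prodA A (fun r : Fin i => s ⟨r, by omega⟩) * prodA A t *
      prodA A (fun r : Fin (n - (i + l)) => s ⟨i + l + r, by omega⟩) := by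
  rw [prodA_eq_mul_window A i (by omega : i + l + (n - (i + l)) = n)]
  congr 3 <;> funext r <;> simp only [insertWindow]
  · rw [dif_neg (by omega)]
  · rw [dif_pos (by omega)]
    congr
    omega
  · rw [dif_neg (by omega)]

theorem exists_windowSlice_mpsVec_eq {n l : ℕ} (i : ℕ) (hi : i + l ≤ n)
    (X : Matrix (Fin D) (Fin D) ℂ) (s : Fin n → Fin d) :
    ∃ Y, windowSlice i s (mpsVec A X n) = mpsVec A Y l := by
  obtain ⟨L, R, hLR⟩ : ∃ L R, ∀ t, prodA A (insertWindow i s t) = L * prodA A t * R :=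
    ⟨_, _, prodA_insertWindow A i hi s⟩
  refine ⟨R * X * L, WithLp.ofLp_injective 2 (funext fun t => ?_)⟩
  show (X * prodA A (insertWindow i s t)).trace = (R * X * L * prodA A t).trace
  rw [hLR, ← mul_assoc, ← mul_assoc, Matrix.trace_mul_comm, ← mul_assoc, ← mul_assoc]

theorem mpsSpace_le_comap_windowSlice {n l : ℕ} (i : ℕ) (hi : i + l ≤ n) (s : Fin n → Fin d) :
    mpsSpace A n ≤ (mpsSpace A l).comap (windowSlice i s) := by
  refine Submodule.span_le.mpr ?_
  rintro _ ⟨X, rfl⟩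
  obtain ⟨Y, hY⟩ := exists_windowSlice_mpsVec_eq A i hi X s
  rw [SetLike.mem_coe, Submodule.mem_comap, hY]
  exact Submodule.subset_span ⟨Y, rfl⟩

theorem localProj_eq_starProjection (l : ℕ) :
    localProj A l = (mpsSpace A l)ᗮ.starProjection :=
  rfl

theorem localProj_eq_zero_of_mem {l : ℕ} {u : EuclideanSpace ℂ (Fin l → Fin d)}
    (hu : u ∈ mpsSpace A l) : localProj A l u = 0 :=
  (Submodule.starProjection_apply_eq_zero_iff _).mpr (Submodule.le_orthogonal_orthogonal _ hu)

theorem embedAt_localProj_eq_zero_of_mem {n l : ℕ} (i : ℕ) (hi : i + l ≤ n)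
    {v : EuclideanSpace ℂ (Fin n → Fin d)} (hv : v ∈ mpsSpace A n) :
    embedAt n l i hi (localProj A l) v = 0 := by
  rw [localProj_eq_starProjection, ← ContinuousLinearMap.coe_coe]
  exact embedAt_eq_zero_of_forall_windowSlice_mem_ker i hi _ fun s =>
    localProj_eq_zero_of_mem A (mpsSpace_le_comap_windowSlice A i hi s hv)

theorem parentH_eq_zero_of_mem {n l : ℕ} (hl : l ≤ n) {v : EuclideanSpace ℂ (Fin n → Fin d)}
    (hv : v ∈ mpsSpace A n) : parentH A n l hl v = 0 :=
  Finset.sum_eq_zero fun _ _ => embedAt_localProj_eq_zero_of_mem A _ _ hv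

end MPS

/-- if S_n(A) ≠ {0} and ℓ ≤ n, then S_n(A) is contained in the kernel of the
ℓ-local open-boundary parent Hamiltonian; in particular the parent Hamiltonian is
frustration free, with the MPS as (zero-energy) ground states. -/
theorem mpsSpace_le_ker_parentH {d D : ℕ} (A : Fin d → Matrix (Fin D) (Fin D) ℂ)
    (n l : ℕ) (hl : l ≤ n) (hS : mpsSpace A n ≠ ⊥) :
    (∀ v ∈ mpsSpace A n, parentH A n l hl v = 0) ∧
    ∃ v : EuclideanSpace ℂ (Fin n → Fin d), v ≠ 0 ∧ parentH A n l hl v = 0 := by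
  obtain ⟨v, hv, hv0⟩ := Submodule.exists_mem_ne_zero_of_ne_bot hS
  exact ⟨fun _ => parentH_eq_zero_of_mem A hl, v, hv0, parentH_eq_zero_of_mem A hl hv⟩
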